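/- Let n ≥ 1, let P_Y be a probability measure on ℝ^n with differentiable density p_Y satisfying ‖∇p_Y(y)‖ ≤ K for all y and some K > 0. Let ỹ ∈ ℝ^n, B > 0, and δ ∈ ℝ^n with ‖δ‖ ≤ B and p_Y(ỹ + δ) = a > 0. Let (μ_y)_{y∈ℝ^n} be a family of probability measures on ℝ^m with finite first moments such that for every r > 0 there is C_r < ∞ (non-decreasing in r) with W₁(μ_{y₁}, μ_{y₂}) ≤ C_r‖y₁ − y₂‖ whenever ‖y₁‖, ‖y₂‖ ≤ r. Set k = a/(2K) + ‖ỹ‖ + B. Let P_Z be a probability measure on ℝ^d and G : ℝ^n × ℝ^d → ℝ^m such that every pushforward G(y,·)_#P_Z has finite first moment, y ↦ G(y,z) is differentiable with ‖∇_y G(y,z)‖ ≤ L_k for all z ∈ supp(P_Z) and all ‖y‖ ≤ k, for some L_k > 0, and the function y ↦ W₁(μ_y, G(y,·)_#P_Z) is measurable with ∫ W₁(μ_y, G(y,·)_#P_Z) dP_Y(y) ≤ ε for some 0 < ε ≤ 1. Then W₁(μ_{ỹ}, G(ỹ + δ,·)_#P_Z) ≤ C_{‖ỹ‖+B}·B +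 (L_k + C_k)·ε^{1/(n+1)}·a/(2K) + 2ε^{1/(n+1)}/(S_n (a/(2K))^n a), where S_n = π^{n/2}/Γ(n/2 + 1). -/

import Mathlib

open MeasureTheory Filter Topology Matrix

/-- The Wasserstein-1 distance: infimum over couplings of the expected distance. -/
noncomputable def W1 {E : Type*} [MeasurableSpace E] [NormedAddCommGroup E]
    (μ ν : Measure E) : ℝ :=
  (⨅ π ∈ {π : Measure (E × E) |
      π.map Prod.fst = μ ∧ π.map Prod.snd = ν ∧ IsProbabilityMeasure π},
    ∫⁻ p, ‖p.1 - p.2‖₊ ∂π).toReal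

/-- A measure has finite first moment. -/
def HasFiniteFirstMoment {E : Type*} [MeasurableSpace E] [NormedAddCommGroup E]
    (μ : Measure E) : Prop :=
  ∫⁻ x, ‖x‖₊ ∂μ ≠ ⊤

/-- Lebesgue volume of the unit ball in ℝ^n. -/
noncomputable def Sn (n : ℕ) : ℝ := Real.pi ^ ((n : ℝ) / 2) / Real.Gamma ((n : ℝ) / 2 + 1)

/-- The (topological) support of a measure: points all of whose open neighborhoods
have positive measure. -/
def measSupport {E : Type*} [TopologicalSpace E] [MeasurableSpace E]
    (μ : Measure E) : Set E := {x | ∀ U : Set E, IsOpen U → x ∈ U → 0 < μ U}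

/-!
The density exceeds `a / 2` on the ball of radius `ρ = ε ^ (1 / (n + 1)) * a / (2 * K)` around
`c = ytil + δ`, because `p_Y` is `K`-Lipschitz and `p_Y c = a`; so this ball has `P_Y`-mass
more than `(a / 2) * S_n * ρ ^ n`, and since `∫ W₁(μ_y, G(y, ·)_# P_Z) dP_Y ≤ ε` some `y₀` in it satisfies
`W₁(μ_{y₀}, G(y₀, ·)_# P_Z) < 2 ε / (S_n ρ ^ n a)`, which is the last term of the bound.
The triangle inequality for `W₁` (glue two couplings along their common marginal) then moves
from `ytil` to `c` at cost `C_{‖ytil‖+B} * B` and from `c` to `y₀` at cost `(C_k + L_k) * ‖c - y₀‖`,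
where the coupling `z ↦ (G(y, z), G(y', z))` of the two pushforwards gives
`W₁(G(y, ·)_# P_Z, G(y', ·)_# P_Z) ≤ L_k * ‖y - y'‖`.
-/

open ProbabilityTheory
open scoped ENNReal

theorem map_compProd_prodMkLeft {α β γ : Type*} [MeasurableSpace α] [MeasurableSpace β]
    [MeasurableSpace γ] (ρ : Measure (α × β)) [SFinite ρ] (κ : Kernel β γ) [IsSFiniteKernel κ] :
    (ρ ⊗ₘ κ.prodMkLeft α).map (fun p => (p.1.2, p.2)) = ρ.snd ⊗ₘ κ := by
  have hm : Measurable fun p : (α × β) × γ => (p.1.2, p.2) := by fun_prop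
  ext s hs
  rw [Measure.map_apply hm hs, Measure.compProd_apply (hm hs), Measure.compProd_apply hs,
    Measure.snd, lintegral_map (Kernel.measurable_kernel_prodMk_left hs) measurable_snd]
  rfl

section Wasserstein

variable {E : Type*} [MeasurableSpace E]

def IsCoupling (μ ν : Measure E) (π : Measure (E × E)) : Prop :=
  π.map Prod.fst = μ ∧ π.map Prod.snd = ν ∧ IsProbabilityMeasure π

theorem IsCoupling.prod (μ ν : Measure E) [IsProbabilityMeasure μ] [IsProbabilityMeasure ν] :
    IsCoupling μ ν (μ.prod ν) :=
  ⟨Measure.fst_prod, Measure.snd_prod, inferInstance⟩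

variable [NormedAddCommGroup E]

noncomputable def transportCost (π : Measure (E × E)) : ℝ≥0∞ :=
  ∫⁻ p, ‖p.1 - p.2‖₊ ∂π

noncomputable def eW1 (μ ν : Measure E) : ℝ≥0∞ :=
  ⨅ π ∈ {π | IsCoupling μ ν π}, transportCost π

theorem W1_eq_toReal_eW1 (μ ν : Measure E) : W1 μ ν = (eW1 μ ν).toReal := rfl

theorem eW1_le_transportCost {μ ν : Measure E} {π : Measure (E × E)} (h : IsCoupling μ ν π) :
    eW1 μ ν ≤ transportCost π :=
  iInf₂_le π h

variable [BorelSpace E]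

theorem IsCoupling.transportCost_le {μ ν : Measure E} {π : Measure (E × E)}
    (h : IsCoupling μ ν π) : transportCost π ≤ (∫⁻ x, ‖x‖₊ ∂μ) + ∫⁻ x, ‖x‖₊ ∂ν := by
  obtain ⟨h₁, h₂, -⟩ := h
  calc transportCost π ≤ ∫⁻ p, ((‖p.1‖₊ : ℝ≥0∞) + ‖p.2‖₊) ∂π :=
        lintegral_mono fun p => by
          rw [← ENNReal.coe_add]; exact ENNReal.coe_le_coe.2 (nnnorm_sub_le p.1 p.2)
    _ = (∫⁻ x, ‖x‖₊ ∂μ) + ∫⁻ x, ‖x‖₊ ∂ν := by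
        rw [lintegral_add_left (by fun_prop), ← h₁, ← h₂,
          lintegral_map (by fun_prop) measurable_fst, lintegral_map (by fun_prop) measurable_snd]

theorem eW1_ne_top {μ ν : Measure E} [IsProbabilityMeasure μ] [IsProbabilityMeasure ν]
    (hμ : HasFiniteFirstMoment μ) (hν : HasFiniteFirstMoment ν) : eW1 μ ν ≠ ⊤ :=
  ne_top_of_le_ne_top (ENNReal.add_ne_top.2 ⟨hμ, hν⟩)
    ((eW1_le_transportCost (.prod μ ν)).trans (IsCoupling.prod μ ν).transportCost_le)

variable [SecondCountableTopology E] [CompleteSpace E]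

theorem IsCoupling.exists_transportCost_le {μ ρ ν : Measure E} {π₁ π₂ : Measure (E × E)}
    (h₁ : IsCoupling μ ρ π₁) (h₂ : IsCoupling ρ ν π₂) :
    ∃ π, IsCoupling μ ν π ∧ transportCost π ≤ transportCost π₁ + transportCost π₂ := by
  obtain ⟨h₁fst, h₁snd, _⟩ := h₁
  obtain ⟨h₂fst, h₂snd, _⟩ := h₂
  -- glue `π₁` and `π₂` along their common marginal `ρ` by disintegrating `π₂` over it
  set τ := π₁ ⊗ₘ π₂.condKernel.prodMkLeft E
  have hτfst : τ.map Prod.fst = π₁ := Measure.fst_compProd π₁ _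
  have hτsnd : τ.map (fun p => (p.1.2, p.2)) = π₂ := by
    rw [map_compProd_prodMkLeft, Measure.snd, h₁snd, ← h₂fst]
    exact Measure.disintegrate π₂ π₂.condKernel
  have hm₁₃ : Measurable fun p : (E × E) × E => (p.1.1, p.2) := by fun_prop
  refine ⟨τ.map fun p => (p.1.1, p.2),
    ⟨?_, ?_, Measure.isProbabilityMeasure_map hm₁₃.aemeasurable⟩, ?_⟩
  · rw [Measure.map_map measurable_fst hm₁₃, ← h₁fst, ← hτfst, Measure.map_map measurable_fst
      measurable_fst]
    rfl
  · rw [Measure.map_map measurable_snd hm₁₃, ← h₂snd, ← hτsnd, Measure.map_map measurable_snd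
      (by fun_prop)]
    rfl
  · rw [transportCost, lintegral_map (by fun_prop) hm₁₃, transportCost, ← hτfst,
      lintegral_map (by fun_prop) measurable_fst, transportCost, ← hτsnd,
      lintegral_map (by fun_prop) (by fun_prop), ← lintegral_add_left (by fun_prop)]
    refine lintegral_mono fun p => ?_
    rw [← ENNReal.coe_add, ENNReal.coe_le_coe]
    simpa only [nndist_eq_nnnorm] using nndist_triangle p.1.1 p.1.2 p.2

theorem eW1_triangle (μ ρ ν : Measure E) : eW1 μ ν ≤ eW1 μ ρ + eW1 ρ ν := by
  simp only [eW1, ENNReal.iInf_add, ENNReal.add_iInf, le_iInf_iff]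
  intro π₂ h₂ π₁ h₁
  obtain ⟨π, hπ, hcost⟩ := IsCoupling.exists_transportCost_le h₁ h₂
  exact (eW1_le_transportCost hπ).trans hcost

theorem W1_triangle {μ ρ ν : Measure E} [IsProbabilityMeasure μ] [IsProbabilityMeasure ρ]
    [IsProbabilityMeasure ν] (hμ : HasFiniteFirstMoment μ) (hρ : HasFiniteFirstMoment ρ)
    (hν : HasFiniteFirstMoment ν) : W1 μ ν ≤ W1 μ ρ + W1 ρ ν := by
  simp only [W1_eq_toReal_eW1]
  exact ENNReal.toReal_le_add (eW1_triangle μ ρ ν) (eW1_ne_top hμ hρ) (eW1_ne_top hρ hν)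

end Wasserstein

section Pushforward

variable {Ω E : Type*} [MeasurableSpace Ω] [MeasurableSpace E]

theorem isCoupling_map_prodMk (P : Measure Ω) [IsProbabilityMeasure P] {f g : Ω → E}
    (hf : Measurable f) (hg : Measurable g) :
    IsCoupling (P.map f) (P.map g) (P.map fun z => (f z, g z)) :=
  ⟨by rw [Measure.map_map measurable_fst (hf.prodMk hg)]; rfl,
    by rw [Measure.map_map measurable_snd (hf.prodMk hg)]; rfl,
    Measure.isProbabilityMeasure_map (hf.prodMk hg).aemeasurable⟩

variable [NormedAddCommGroup E] [BorelSpace E] [SecondCountableTopology E]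

theorem W1_map_le (P : Measure Ω) [IsProbabilityMeasure P] {f g : Ω → E}
    (hf : Measurable f) (hg : Measurable g) {L : ℝ} (hL : 0 ≤ L)
    (h : ∀ᵐ z ∂P, ‖f z - g z‖ ≤ L) : W1 (P.map f) (P.map g) ≤ L := by
  rw [W1_eq_toReal_eW1]
  refine ENNReal.toReal_le_of_le_ofReal hL ((eW1_le_transportCost
    (isCoupling_map_prodMk P hf hg)).trans ?_)
  rw [transportCost, lintegral_map (by fun_prop) (hf.prodMk hg)]
  calc ∫⁻ z, (‖f z - g z‖₊ : ℝ≥0∞) ∂P ≤ ∫⁻ _, ENNReal.ofReal L ∂P := by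
        refine lintegral_mono_ae (h.mono fun z hz => ?_)
        rw [← ENNReal.ofReal_coe_nnreal, coe_nnnorm]
        exact ENNReal.ofReal_le_ofReal hz
    _ = ENNReal.ofReal L := by simp

end Pushforward

theorem ae_mem_measSupport {E : Type*} [TopologicalSpace E] [SecondCountableTopology E]
    [MeasurableSpace E] (μ : Measure E) : ∀ᵐ x ∂μ, x ∈ measSupport μ := by
  obtain ⟨b, hbc, -, hb⟩ := TopologicalSpace.exists_countable_basis E
  refine measure_mono_null (t := ⋃₀ {U ∈ b | μ U = 0}) (fun x hx => ?_)
    ((measure_sUnion_null_iff (hbc.mono (Set.sep_subset _ _))).2 fun U hU => hU.2)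
  obtain ⟨U, hU, hxU, hU0⟩ : ∃ U, IsOpen U ∧ x ∈ U ∧ μ U = 0 := by simpa [measSupport] using hx
  obtain ⟨V, hVb, hxV, hVU⟩ := hb.exists_subset_of_mem_open hxU hU
  exact ⟨V, ⟨hVb, measure_mono_null hVU hU0⟩, hxV⟩

theorem nonneg_of_forall_W1_le_mul_norm_sub {E F : Type*} [NormedAddCommGroup E]
    [NormedSpace ℝ E] [Nontrivial E] [NormedAddCommGroup F] [MeasurableSpace F]
    {μ : E → Measure F} {r c : ℝ} (hr : 0 < r)
    (h : ∀ y₁ y₂ : E, ‖y₁‖ ≤ r → ‖y₂‖ ≤ r → W1 (μ y₁) (μ y₂) ≤ c * ‖y₁ - y₂‖) : 0 ≤ c := by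
  obtain ⟨v, hv⟩ := exists_norm_eq E hr.le
  have := h 0 v (by simpa using hr.le) hv.le
  rw [zero_sub, norm_neg, hv] at this
  exact nonneg_of_mul_nonneg_left (ENNReal.toReal_nonneg.trans this) hr

theorem half_lt_of_mem_ball {E : Type*} [NormedAddCommGroup E] [NormedSpace ℝ E] {p : E → ℝ}
    {p' : E → E →L[ℝ] ℝ} {K a : ℝ} {c y : E} (hp : ∀ x, HasFDerivAt p (p' x) x)
    (hp' : ∀ x, ‖p' x‖ ≤ K) (hK : 0 < K) (hpc : p c = a) (hy : y ∈ Metric.ball c (a / (2 * K))) :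
    a / 2 < p y := by
  have hlip : ‖p c - p y‖ ≤ K * ‖c - y‖ :=
    convex_univ.norm_image_sub_le_of_norm_hasFDerivWithin_le
      (fun x _ => (hp x).hasFDerivWithinAt) (fun x _ => hp' x) trivial trivial
  have hdist : K * ‖c - y‖ < a / 2 := by
    rw [← dist_eq_norm, dist_comm]
    calc K * dist y c < K * (a / (2 * K)) := by gcongr; exact hy
      _ = a / 2 := by field_simp
  rw [hpc, Real.norm_eq_abs] at hlip
  linarith [le_abs_self (a - p y)]

theorem exists_mem_lt_of_lintegral_lt {α : Type*} [MeasurableSpace α] {μ : Measure α}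
    {f : α → ℝ≥0∞} {s : Set α} (hs : MeasurableSet s) {t : ℝ≥0∞}
    (h : ∫⁻ x, f x ∂μ < t * μ s) : ∃ x ∈ s, f x < t := by
  by_contra! hf
  refine h.not_ge ?_
  calc t * μ s = ∫⁻ x, s.indicator (fun _ => t) x ∂μ := (lintegral_indicator_const hs t).symm
    _ ≤ ∫⁻ x, f x ∂μ := lintegral_mono fun x => by
        by_cases hx : x ∈ s
        · simpa [hx] using hf x hx
        · simp [hx]

theorem ofReal_mul_lt_withDensity_apply {α : Type*} [MeasurableSpace α] {μ : Measure α}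
    {p : α → ℝ} (hp : Measurable p) {s : Set α} (hs : MeasurableSet s) (hμs : μ s ≠ 0)
    (hμs' : μ s ≠ ⊤) {b : ℝ} (hb₀ : 0 ≤ b) (hb : ∀ x ∈ s, b < p x) :
    ENNReal.ofReal b * μ s < μ.withDensity (fun x => ENNReal.ofReal (p x)) s := by
  rw [withDensity_apply _ hs, ← setLIntegral_const]
  refine setLIntegral_strict_mono hs hμs hp.ennreal_ofReal
    (by rw [setLIntegral_const]; exact ENNReal.mul_ne_top ENNReal.ofReal_ne_top hμs')
    (ae_of_all _ fun x hx => ENNReal.ofReal_lt_ofReal_iff'.2 ⟨hb x hx, hb₀.trans_lt (hb x hx)⟩)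

theorem Sn_pos (n : ℕ) : 0 < Sn n :=
  div_pos (Real.rpow_pos_of_pos Real.pi_pos _) (Real.Gamma_pos_of_pos (by positivity))

section Density

open Metric Module

variable {E : Type*} [NormedAddCommGroup E] [InnerProductSpace ℝ E] [FiniteDimensional ℝ E]
  [MeasurableSpace E] [BorelSpace E] [Nontrivial E]

theorem volume_ball_eq_Sn (c : E) {r : ℝ} (hr : 0 ≤ r) :
    volume (ball c r) = ENNReal.ofReal (Sn (finrank ℝ E) * r ^ finrank ℝ E) := by
  rw [InnerProductSpace.volume_ball, ← ENNReal.ofReal_pow hr, ← ENNReal.ofReal_mul (by positivity),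
    Sn, mul_comm, Real.sqrt_eq_rpow, ← Real.rpow_natCast, ← Real.rpow_mul Real.pi_pos.le,
    one_div_mul_eq_div]

theorem exists_mem_ball_lt_of_lintegral_withDensity_le {p f : E → ℝ} (hp : Measurable p) {c : E}
    {a ρ ε : ℝ} (ha : 0 < a) (hρ : 0 < ρ) (hε : 0 < ε) (hp_ball : ∀ y ∈ ball c ρ, a / 2 < p y)
    (hf : ∫⁻ y, ENNReal.ofReal (f y) ∂(volume.withDensity fun y => ENNReal.ofReal (p y)) ≤
      ENNReal.ofReal ε) :
    ∃ y ∈ ball c ρ, f y < 2 * ε / (Sn (finrank ℝ E) * ρ ^ finrank ℝ E * a) := by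
  set V := Sn (finrank ℝ E) * ρ ^ finrank ℝ E
  have hV : 0 < V := mul_pos (Sn_pos _) (pow_pos hρ _)
  have hvol : volume (ball c ρ) = ENNReal.ofReal V := volume_ball_eq_Sn c hρ.le
  have hmass := ofReal_mul_lt_withDensity_apply hp measurableSet_ball
    (by rw [hvol]; exact ENNReal.ofReal_pos.2 hV |>.ne') (by rw [hvol]; exact ENNReal.ofReal_ne_top)
    (by positivity) hp_ball
  obtain ⟨y, hy, hfy⟩ := exists_mem_lt_of_lintegral_lt measurableSet_ball
    (t := ENNReal.ofReal (2 * ε / (V * a))) <| calc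
      _ ≤ ENNReal.ofReal ε := hf
      _ = ENNReal.ofReal (2 * ε / (V * a)) * (ENNReal.ofReal (a / 2) * volume (ball c ρ)) := by
        rw [hvol, ← ENNReal.ofReal_mul (by positivity), ← ENNReal.ofReal_mul (by positivity)]
        congr 1
        field_simp
      _ < _ := (ENNReal.mul_lt_mul_iff_right (by positivity) ENNReal.ofReal_ne_top).2 hmass
  exact ⟨y, hy, (ENNReal.ofReal_lt_ofReal_iff (by positivity)).1 hfy⟩

end Density

section Discrepancy

variable {Ω E F : Type*} [MeasurableSpace Ω] [TopologicalSpace Ω] [SecondCountableTopology Ω]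
  [NormedAddCommGroup E] [NormedSpace ℝ E] [NormedAddCommGroup F] [NormedSpace ℝ F]
  [MeasurableSpace F] [BorelSpace F] [SecondCountableTopology F]
  (P : Measure Ω) [IsProbabilityMeasure P] {G : E → Ω → F} {G' : E → Ω → E →L[ℝ] F} {k L : ℝ}

theorem W1_map_le_mul_norm_sub (hG : ∀ y, Measurable (G y)) (hL : 0 ≤ L)
    (hG' : ∀ z ∈ measSupport P, ∀ y, ‖y‖ ≤ k →
      HasFDerivAt (fun y' => G y' z) (G' y z) y ∧ ‖G' y z‖ ≤ L)
    {y₁ y₂ : E} (hy₁ : ‖y₁‖ ≤ k) (hy₂ : ‖y₂‖ ≤ k) :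
    W1 (P.map (G y₁)) (P.map (G y₂)) ≤ L * ‖y₁ - y₂‖ := by
  refine W1_map_le P (hG _) (hG _) (by positivity) <| (ae_mem_measSupport P).mono fun z hz => ?_
  exact (convex_closedBall 0 k).norm_image_sub_le_of_norm_hasFDerivWithin_le
    (fun y hy => (hG' z hz y (mem_closedBall_zero_iff.1 hy)).1.hasFDerivWithinAt)
    (fun y hy => (hG' z hz y (mem_closedBall_zero_iff.1 hy)).2)
    (mem_closedBall_zero_iff.2 hy₂) (mem_closedBall_zero_iff.2 hy₁)

variable [CompleteSpace F] {μ : E → Measure F} [∀ y, IsProbabilityMeasure (μ y)] {C : ℝ}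

theorem W1_le_W1_add_mul_norm_sub (hμ : ∀ y, HasFiniteFirstMoment (μ y))
    (hG : ∀ y, Measurable (G y)) (hGμ : ∀ y, HasFiniteFirstMoment (P.map (G y))) (hL : 0 ≤ L)
    (hC : ∀ y₁ y₂ : E, ‖y₁‖ ≤ k → ‖y₂‖ ≤ k → W1 (μ y₁) (μ y₂) ≤ C * ‖y₁ - y₂‖)
    (hG' : ∀ z ∈ measSupport P, ∀ y, ‖y‖ ≤ k →
      HasFDerivAt (fun y' => G y' z) (G' y z) y ∧ ‖G' y z‖ ≤ L)
    {y₁ y₂ : E} (hy₁ : ‖y₁‖ ≤ k) (hy₂ : ‖y₂‖ ≤ k) :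
    W1 (μ y₁) (P.map (G y₁)) ≤ W1 (μ y₂) (P.map (G y₂)) + (C + L) * ‖y₁ - y₂‖ := by
  have (y : E) : IsProbabilityMeasure (P.map (G y)) :=
    Measure.isProbabilityMeasure_map (hG y).aemeasurable
  calc W1 (μ y₁) (P.map (G y₁))
      ≤ W1 (μ y₁) (μ y₂) + (W1 (μ y₂) (P.map (G y₂)) + W1 (P.map (G y₂)) (P.map (G y₁))) :=
        (W1_triangle (hμ _) (hμ _) (hGμ _)).trans
          (add_le_add_right (W1_triangle (hμ _) (hGμ _) (hGμ _)) _)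
    _ ≤ C * ‖y₁ - y₂‖ + (W1 (μ y₂) (P.map (G y₂)) + L * ‖y₂ - y₁‖) := by
        gcongr
        exacts [hC _ _ hy₁ hy₂, W1_map_le_mul_norm_sub P hG hL hG' hy₂ hy₁]
    _ = _ := by rw [norm_sub_rev]; ring

end Discrepancy

theorem rpow_one_div_add_one_pow_succ {ε : ℝ} (hε : 0 ≤ ε) (n : ℕ) :
    (ε ^ (1 / ((n : ℝ) + 1))) ^ (n + 1) = ε := by
  rw [← Real.rpow_natCast, ← Real.rpow_mul hε]
  push_cast
  rw [one_div_mul_cancel (by positivity), Real.rpow_one]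

theorem stmt_10_general {n m d : ℕ} (hn : 1 ≤ n)
    (pY : EuclideanSpace ℝ (Fin n) → ℝ)
    (PY : Measure (EuclideanSpace ℝ (Fin n)))
    (hPY : PY = volume.withDensity (fun y => ENNReal.ofReal (pY y)))
    (K : ℝ) (hK : 0 < K)
    (DY : EuclideanSpace ℝ (Fin n) → (EuclideanSpace ℝ (Fin n) →L[ℝ] ℝ))
    (hderivY : ∀ y, HasFDerivAt pY (DY y) y)
    (hDYbound : ∀ y, ‖DY y‖ ≤ K)
    (ytil : EuclideanSpace ℝ (Fin n)) (B : ℝ) (hB : 0 < B)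
    (δ : EuclideanSpace ℝ (Fin n)) (hδ : ‖δ‖ ≤ B)
    (a : ℝ) (ha : 0 < a) (hpa : pY (ytil + δ) = a)
    (μ : EuclideanSpace ℝ (Fin n) → Measure (EuclideanSpace ℝ (Fin m)))
    (hμprob : ∀ y, IsProbabilityMeasure (μ y))
    (hμmom : ∀ y, HasFiniteFirstMoment (μ y))
    (C : ℝ → ℝ)
    (hClip : ∀ r > (0 : ℝ), ∀ y₁ y₂ : EuclideanSpace ℝ (Fin n), ‖y₁‖ ≤ r → ‖y₂‖ ≤ r →
      W1 (μ y₁) (μ y₂) ≤ C r * ‖y₁ - y₂‖)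
    (k : ℝ) (hk : k = a / (2 * K) + ‖ytil‖ + B)
    (PZ : Measure (EuclideanSpace ℝ (Fin d))) (hPZprob : IsProbabilityMeasure PZ)
    (G : EuclideanSpace ℝ (Fin n) → EuclideanSpace ℝ (Fin d) → EuclideanSpace ℝ (Fin m))
    (hGmeas : ∀ y : EuclideanSpace ℝ (Fin n), Measurable (G y))
    (hGmom : ∀ y : EuclideanSpace ℝ (Fin n), HasFiniteFirstMoment (PZ.map (G y)))
    (Lk : ℝ) (hLk : 0 < Lk)
    (DG : EuclideanSpace ℝ (Fin n) → EuclideanSpace ℝ (Fin d) →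
      (EuclideanSpace ℝ (Fin n) →L[ℝ] EuclideanSpace ℝ (Fin m)))
    (hderivG : ∀ z ∈ measSupport PZ, ∀ y : EuclideanSpace ℝ (Fin n), ‖y‖ ≤ k →
      HasFDerivAt (fun y' => G y' z) (DG y z) y ∧ ‖DG y z‖ ≤ Lk)
    (ε : ℝ) (hε0 : 0 < ε) (hε1 : ε ≤ 1)
    (hint : ∫⁻ y, ENNReal.ofReal (W1 (μ y) (PZ.map (G y))) ∂PY ≤ ENNReal.ofReal ε) :
    W1 (μ ytil) (PZ.map (G (ytil + δ))) ≤
      C (‖ytil‖ + B) * B + (Lk + C k) * (ε ^ (1 / ((n : ℝ) + 1)) * a / (2 * K)) +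
        2 * ε ^ (1 / ((n : ℝ) + 1)) / (Sn n * (a / (2 * K)) ^ n * a) := by
  have : Nonempty (Fin n) := ⟨⟨0, hn⟩⟩
  have := hμprob
  set r := a / (2 * K)
  set q := ε ^ (1 / ((n : ℝ) + 1))
  set c := ytil + δ
  have hr : 0 < r := by positivity
  have hq : 0 < q := by positivity
  have hqr : q * r ≤ r := mul_le_of_le_one_left hr.le (Real.rpow_le_one hε0.le hε1 (by positivity))
  obtain ⟨y₀, hy₀, hWy₀⟩ := exists_mem_ball_lt_of_lintegral_withDensity_le
    (continuous_iff_continuousAt.2 fun y => (hderivY y).continuousAt).measurable ha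
    (mul_pos hq hr) hε0
    (fun y hy => half_lt_of_mem_ball hderivY hDYbound hK hpa (Metric.ball_subset_ball hqr hy))
    (hPY ▸ hint)
  have hWy₀' : W1 (μ y₀) (PZ.map (G y₀)) ≤ 2 * q / (Sn n * r ^ n * a) := by
    have hε : q ^ (n + 1) = ε := rpow_one_div_add_one_pow_succ hε0.le n
    refine hWy₀.le.trans_eq ?_
    rw [finrank_euclideanSpace_fin, ← hε, pow_succ', mul_pow]
    field_simp
  have hy₀c : ‖c - y₀‖ ≤ q * r := (mem_ball_iff_norm'.1 hy₀).le
  have hc : ‖c‖ ≤ ‖ytil‖ + B := (norm_add_le _ _).trans (by linarith)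
  have hk0 : 0 < k := by rw [hk]; positivity
  have hCB := nonneg_of_forall_W1_le_mul_norm_sub (by positivity)
    (hClip (‖ytil‖ + B) (by positivity))
  have hCk := nonneg_of_forall_W1_le_mul_norm_sub hk0 (hClip k hk0)
  have hμ : W1 (μ ytil) (μ c) ≤ C (‖ytil‖ + B) * B := by
    refine (hClip _ (by positivity) _ _ (by linarith [norm_nonneg ytil]) hc).trans ?_
    rw [sub_add_cancel_left, norm_neg]
    gcongr
  have hdisc := W1_le_W1_add_mul_norm_sub PZ hμmom hGmeas hGmom hLk.le (hClip k hk0) hderivG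
    (y₁ := c) (y₂ := y₀) (by rw [hk]; linarith)
    (by rw [hk]; linarith [norm_le_norm_add_norm_sub c y₀])
  have : IsProbabilityMeasure (PZ.map (G c)) :=
    Measure.isProbabilityMeasure_map (hGmeas c).aemeasurable
  calc W1 (μ ytil) (PZ.map (G c))
      ≤ W1 (μ ytil) (μ c) + W1 (μ c) (PZ.map (G c)) := W1_triangle (hμmom _) (hμmom _) (hGmom _)
    _ ≤ C (‖ytil‖ + B) * B + (2 * q / (Sn n * r ^ n * a) + (C k + Lk) * (q * r)) := by
        gcongr
        exact hdisc.trans (by gcongr)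
    _ = _ := by ring

/-- worst-case bound for adversarial attacks on the observation. -/
theorem stmt_10 {n m d : ℕ} (hn : 1 ≤ n)
    (pY : EuclideanSpace ℝ (Fin n) → ℝ)
    (PY : Measure (EuclideanSpace ℝ (Fin n)))
    (hPYprob : IsProbabilityMeasure PY)
    (hPY : PY = volume.withDensity (fun y => ENNReal.ofReal (pY y)))
    (K : ℝ) (hK : 0 < K)
    (DY : EuclideanSpace ℝ (Fin n) → (EuclideanSpace ℝ (Fin n) →L[ℝ] ℝ))
    (hderivY : ∀ y, HasFDerivAt pY (DY y) y)
    (hDYbound : ∀ y, ‖DY y‖ ≤ K)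
    (ytil : EuclideanSpace ℝ (Fin n)) (B : ℝ) (hB : 0 < B)
    (δ : EuclideanSpace ℝ (Fin n)) (hδ : ‖δ‖ ≤ B)
    (a : ℝ) (ha : 0 < a) (hpa : pY (ytil + δ) = a)
    (μ : EuclideanSpace ℝ (Fin n) → Measure (EuclideanSpace ℝ (Fin m)))
    (hμprob : ∀ y, IsProbabilityMeasure (μ y))
    (hμmom : ∀ y, HasFiniteFirstMoment (μ y))
    (C : ℝ → ℝ) (hCmono : Monotone C)
    (hClip : ∀ r > (0 : ℝ), ∀ y₁ y₂ : EuclideanSpace ℝ (Fin n), ‖y₁‖ ≤ r → ‖y₂‖ ≤ r →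
      W1 (μ y₁) (μ y₂) ≤ C r * ‖y₁ - y₂‖)
    (k : ℝ) (hk : k = a / (2 * K) + ‖ytil‖ + B)
    (PZ : Measure (EuclideanSpace ℝ (Fin d))) (hPZprob : IsProbabilityMeasure PZ)
    (G : EuclideanSpace ℝ (Fin n) → EuclideanSpace ℝ (Fin d) → EuclideanSpace ℝ (Fin m))
    (hGmeas : ∀ y : EuclideanSpace ℝ (Fin n), Measurable (G y))
    (hGmom : ∀ y : EuclideanSpace ℝ (Fin n), HasFiniteFirstMoment (PZ.map (G y)))
    (Lk : ℝ) (hLk : 0 < Lk)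
    (DG : EuclideanSpace ℝ (Fin n) → EuclideanSpace ℝ (Fin d) →
      (EuclideanSpace ℝ (Fin n) →L[ℝ] EuclideanSpace ℝ (Fin m)))
    (hderivG : ∀ z ∈ measSupport PZ, ∀ y : EuclideanSpace ℝ (Fin n), ‖y‖ ≤ k →
      HasFDerivAt (fun y' => G y' z) (DG y z) y ∧ ‖DG y z‖ ≤ Lk)
    (hWmeas : Measurable fun y => W1 (μ y) (PZ.map (G y)))
    (ε : ℝ) (hε0 : 0 < ε) (hε1 : ε ≤ 1)
    (hint : ∫⁻ y, ENNReal.ofReal (W1 (μ y) (PZ.map (G y))) ∂PY ≤ ENNReal.ofReal ε) :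
    W1 (μ ytil) (PZ.map (G (ytil + δ))) ≤
      C (‖ytil‖ + B) * B + (Lk + C k) * (ε ^ (1 / ((n : ℝ) + 1)) * a / (2 * K)) +
        2 * ε ^ (1 / ((n : ℝ) + 1)) / (Sn n * (a / (2 * K)) ^ n * a) :=
  stmt_10_general hn pY PY hPY K hK DY hderivY hDYbound ytil B hB δ hδ a ha hpa μ hμprob hμmom C
    hClip k hk PZ hPZprob G hGmeas hGmom Lk hLk DG hderivG ε hε0 hε1 hint
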